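/- arXiv:2601.16970 — 4 statements merged into one kernel-verified Lean document; each statement's English description precedes it below -/
import Mathlib

section
/- Let H be a symmetric positive-definite d×d real matrix, x₁* ≠ x₂* ∈ ℝ^d, s₁, s₂ > 0, p > 0, y₁*, y₂* ∈ ℝ, and define the peak functions f_i(x) = s_i · (½ (x − x_i*)ᵀ H (x − x_i*))^{p/2} + y_i* for i = 1, 2 (with identical Hessian H and identical exponent p). Let Δ = (x₂* − x₁*)ᵀ H (x₂* − x₁*). Then for every t ∈ [0,1], at the Pareto-set point x_t = (1 − t) x₁* + t x₂* one has ((f₁(x_t) − y₁*)/s₁)^{1/p} + ((f₂(x_t) − y₂*)/s₂)^{1/p} = (Δ/2)^{1/2}; in particular, for p = 1 the Pareto front is a line segment in the objective space. -/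
open Matrix

/-!
Along the segment from `x₁` to `x₂` the displacements from the two peaks are `t • v` and
`(t - 1) • v` with `v = x₂ - x₁`, so the two quadratic forms are `t² Δ` and `(1 - t)² Δ`.
Undoing the scale, the shift and the power `p / 2` leaves `|t| √(Δ / 2)` and `|1 - t| √(Δ / 2)`,
which add up to `√(Δ / 2)` on `[0, 1]`; for `p = 1` both objectives are therefore affine in `t`.
-/

theorem Real.sq_mul_rpow_one_div_two (c : ℝ) {a : ℝ} (ha : 0 ≤ a) :
    (c ^ 2 * a) ^ ((1 : ℝ) / 2) = |c| * a ^ ((1 : ℝ) / 2) := by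
  rw [Real.mul_rpow (sq_nonneg c) ha, ← Real.sqrt_eq_rpow, Real.sqrt_sq_eq_abs]

section PeakFunction

variable {n : Type*} [Fintype n]

noncomputable def peakFunction (H : Matrix n n ℝ) (x₀ : n → ℝ) (s p y₀ : ℝ) (x : n → ℝ) : ℝ :=
  s * ((1 / 2) * ((x - x₀) ⬝ᵥ H.mulVec (x - x₀))) ^ (p / 2) + y₀

theorem Matrix.PosSemidef.dotProduct_mulVec_self_div_two_nonneg {H : Matrix n n ℝ}
    (hH : H.PosSemidef) (v : n → ℝ) : 0 ≤ v ⬝ᵥ H.mulVec v / 2 :=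
  div_nonneg (by simpa using hH.dotProduct_mulVec_nonneg v) zero_le_two

theorem peakFunction_of_sub_eq_smul (H : Matrix n n ℝ) {x₀ x v : n → ℝ} (s p y₀ : ℝ) {c : ℝ}
    (hx : x - x₀ = c • v) :
    peakFunction H x₀ s p y₀ x = s * (c ^ 2 * (v ⬝ᵥ H.mulVec v / 2)) ^ (p / 2) + y₀ := by
  rw [peakFunction, hx, mulVec_smul, smul_dotProduct, dotProduct_smul, smul_eq_mul, smul_eq_mul]
  ring_nf

theorem peakFunction_one_of_sub_eq_smul {H : Matrix n n ℝ} (hH : H.PosSemidef)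
    {x₀ x v : n → ℝ} (s y₀ : ℝ) {c : ℝ} (hx : x - x₀ = c • v) :
    peakFunction H x₀ s 1 y₀ x = s * (|c| * (v ⬝ᵥ H.mulVec v / 2) ^ ((1 : ℝ) / 2)) + y₀ := by
  have hv := hH.dotProduct_mulVec_self_div_two_nonneg v
  rw [peakFunction_of_sub_eq_smul H s 1 y₀ hx, Real.sq_mul_rpow_one_div_two c hv]

theorem peakFunction_level_of_sub_eq_smul {H : Matrix n n ℝ} (hH : H.PosSemidef)
    {x₀ x v : n → ℝ} {s p : ℝ} (y₀ : ℝ) {c : ℝ} (hs : s ≠ 0) (hp : p ≠ 0)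
    (hx : x - x₀ = c • v) :
    ((peakFunction H x₀ s p y₀ x - y₀) / s) ^ (1 / p) =
      |c| * (v ⬝ᵥ H.mulVec v / 2) ^ ((1 : ℝ) / 2) := by
  have hv := hH.dotProduct_mulVec_self_div_two_nonneg v
  have hexp : p / 2 * (1 / p) = 1 / 2 := by field_simp
  rw [peakFunction_of_sub_eq_smul H s p y₀ hx, add_sub_cancel_right, mul_div_cancel_left₀ _ hs,
    ← Real.rpow_mul (mul_nonneg (sq_nonneg c) hv), hexp, Real.sq_mul_rpow_one_div_two c hv]

end PeakFunction

theorem one_sub_smul_add_smul_sub_left {R E : Type*} [CommRing R] [AddCommGroup E] [Module R E]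
    (x₁ x₂ : E) (t : R) : (1 - t) • x₁ + t • x₂ - x₁ = t • (x₂ - x₁) := by
  module

theorem one_sub_smul_add_smul_sub_right {R E : Type*} [CommRing R] [AddCommGroup E] [Module R E]
    (x₁ x₂ : E) (t : R) : (1 - t) • x₁ + t • x₂ - x₂ = (t - 1) • (x₂ - x₁) := by
  module

theorem image_Icc_eq_segment_of_affine {E : Type*} [AddCommGroup E] [Module ℝ E]
    (F : ℝ → E) (hF : ∀ t ∈ Set.Icc (0 : ℝ) 1, F t = (1 - t) • F 0 + t • F 1) :
    F '' Set.Icc 0 1 = segment ℝ (F 0) (F 1) := by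
  rw [segment_eq_image]
  exact Set.image_congr hF

theorem same_hessian_peak_front_equation_general {d : ℕ}
    (H : Matrix (Fin d) (Fin d) ℝ) (hH : H.PosDef)
    (x₁ x₂ : Fin d → ℝ)
    (s₁ s₂ p : ℝ) (hs₁ : 0 < s₁) (hs₂ : 0 < s₂) (hp : 0 < p)
    (y₁ y₂ : ℝ) (f₁ f₂ : (Fin d → ℝ) → ℝ)
    (hf₁ : ∀ x, f₁ x =
      s₁ * ((1 / 2) * ((x - x₁) ⬝ᵥ H.mulVec (x - x₁))) ^ (p / 2) + y₁)
    (hf₂ : ∀ x, f₂ x =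
      s₂ * ((1 / 2) * ((x - x₂) ⬝ᵥ H.mulVec (x - x₂))) ^ (p / 2) + y₂)
    (Δ : ℝ) (hΔ : Δ = (x₂ - x₁) ⬝ᵥ H.mulVec (x₂ - x₁)) :
    (∀ t ∈ Set.Icc (0 : ℝ) 1,
      ((f₁ ((1 - t) • x₁ + t • x₂) - y₁) / s₁) ^ (1 / p) +
        ((f₂ ((1 - t) • x₁ + t • x₂) - y₂) / s₂) ^ (1 / p) =
          (Δ / 2) ^ ((1 : ℝ) / 2)) ∧
    (p = 1 →
      (fun t : ℝ => (f₁ ((1 - t) • x₁ + t • x₂), f₂ ((1 - t) • x₁ + t • x₂))) ''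
          Set.Icc (0 : ℝ) 1 =
        segment ℝ (f₁ x₁, f₂ x₁) (f₁ x₂, f₂ x₂)) := by
  obtain rfl : f₁ = peakFunction H x₁ s₁ p y₁ := funext hf₁
  obtain rfl : f₂ = peakFunction H x₂ s₂ p y₂ := funext hf₂
  subst hΔ
  refine ⟨fun t ⟨ht₀, ht₁⟩ => ?_, fun hp₁ => ?_⟩
  · rw [peakFunction_level_of_sub_eq_smul hH.posSemidef y₁ hs₁.ne' hp.ne'
        (one_sub_smul_add_smul_sub_left x₁ x₂ t),
      peakFunction_level_of_sub_eq_smul hH.posSemidef y₂ hs₂.ne' hp.ne'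
        (one_sub_smul_add_smul_sub_right x₁ x₂ t),
      abs_of_nonneg ht₀, abs_of_nonpos (sub_nonpos.mpr ht₁)]
    ring
  · subst hp₁
    have hvalue₁ (t : ℝ) := peakFunction_one_of_sub_eq_smul hH.posSemidef s₁ y₁
      (one_sub_smul_add_smul_sub_left x₁ x₂ t)
    have hvalue₂ (t : ℝ) := peakFunction_one_of_sub_eq_smul hH.posSemidef s₂ y₂
      (one_sub_smul_add_smul_sub_right x₁ x₂ t)
    set F : ℝ → ℝ × ℝ := fun t => (peakFunction H x₁ s₁ 1 y₁ ((1 - t) • x₁ + t • x₂),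
      peakFunction H x₂ s₂ 1 y₂ ((1 - t) • x₁ + t • x₂))
    have hline : ∀ t ∈ Set.Icc (0 : ℝ) 1, F t = (1 - t) • F 0 + t • F 1 := by
      rintro t ⟨ht₀, ht₁⟩
      simp only [F, hvalue₁, hvalue₂, abs_of_nonneg ht₀, abs_of_nonpos (sub_nonpos.mpr ht₁),
        abs_zero, abs_one, zero_sub, abs_neg, sub_self, Prod.smul_mk, Prod.mk_add_mk, smul_eq_mul]
      ext <;> ring
    simpa [F] using image_Icc_eq_segment_of_affine F hline

/-- For two peak functions sharing the same symmetric positive-definite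
Hessian `H` and the same exponent `p`, along the Pareto set `x_t = (1−t)x₁* + tx₂*`,
`t ∈ [0,1]`, with `Δ = (x₂* − x₁*)ᵀ H (x₂* − x₁*)`, one has
`((f₁(x_t) − y₁*)/s₁)^{1/p} + ((f₂(x_t) − y₂*)/s₂)^{1/p} = (Δ/2)^{1/2}`;
in particular for `p = 1` the Pareto front is a line segment in the objective space. -/
theorem same_hessian_peak_front_equation {d : ℕ}
    (H : Matrix (Fin d) (Fin d) ℝ) (hH : H.PosDef)
    (x₁ x₂ : Fin d → ℝ) (hx : x₁ ≠ x₂)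
    (s₁ s₂ p : ℝ) (hs₁ : 0 < s₁) (hs₂ : 0 < s₂) (hp : 0 < p)
    (y₁ y₂ : ℝ) (f₁ f₂ : (Fin d → ℝ) → ℝ)
    (hf₁ : ∀ x, f₁ x =
      s₁ * ((1 / 2) * ((x - x₁) ⬝ᵥ H.mulVec (x - x₁))) ^ (p / 2) + y₁)
    (hf₂ : ∀ x, f₂ x =
      s₂ * ((1 / 2) * ((x - x₂) ⬝ᵥ H.mulVec (x - x₂))) ^ (p / 2) + y₂)
    (Δ : ℝ) (hΔ : Δ = (x₂ - x₁) ⬝ᵥ H.mulVec (x₂ - x₁)) :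
    (∀ t ∈ Set.Icc (0 : ℝ) 1,
      ((f₁ ((1 - t) • x₁ + t • x₂) - y₁) / s₁) ^ (1 / p) +
        ((f₂ ((1 - t) • x₁ + t • x₂) - y₂) / s₂) ^ (1 / p) =
          (Δ / 2) ^ ((1 : ℝ) / 2)) ∧
    (p = 1 →
      (fun t : ℝ => (f₁ ((1 - t) • x₁ + t • x₂), f₂ ((1 - t) • x₁ + t • x₂))) ''
          Set.Icc (0 : ℝ) 1 =
        segment ℝ (f₁ x₁, f₂ x₁) (f₁ x₂, f₂ x₂)) :=
  same_hessian_peak_front_equation_general H hH x₁ x₂ s₁ s₂ p hs₁ hs₂ hp y₁ y₂ f₁ f₂ hf₁ hf₂ Δ hΔ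
end

section
/- Let f₁, f₂ be convex-quadratic functions on ℝ^d with symmetric positive-definite Hessians H₁, H₂ and optima x₁*, x₂*, and for t ∈ [0,1] let x_t* = ((1 − t) H₁ + t H₂)⁻¹ ((1 − t) H₁ x₁* + t H₂ x₂*). Then the map t ↦ f₁(x_t*) is monotonically nondecreasing on [0,1] and the map t ↦ f₂(x_t*) is monotonically nonincreasing on [0,1]. -/
/-!
For `t ∈ [0,1]` the point `x_t*` is a stationary point, hence a global minimizer, of the convex
function `(1 - t) f₁ + t f₂`. Comparing the optimality of `x_s*` and `x_t*` for the weights of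
each other, with multipliers `t` and `s` (resp. `1 - t` and `1 - s`), leaves
`(t - s) (f₁ x_s* - f₁ x_t*) ≤ 0` (resp. `(t - s) (f₂ x_t* - f₂ x_s*) ≤ 0`).
-/

open Matrix

namespace Matrix

variable {n : Type*} {H H₁ H₂ : Matrix n n ℝ}

theorem PosDef.one_sub_smul_add_smul (hH₁ : H₁.PosDef) (hH₂ : H₂.PosDef) {t : ℝ}
    (ht : t ∈ Set.Icc (0 : ℝ) 1) : ((1 - t) • H₁ + t • H₂).PosDef := by
  rcases ht.2.lt_or_eq with ht1 | rfl
  · exact (hH₁.smul (sub_pos.2 ht1)).add_posSemidef (hH₂.posSemidef.smul ht.1)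
  · simpa using hH₂

variable [Fintype n]

theorem PosSemidef.tangent_le (hH : H.PosSemidef) (c x y : n → ℝ) :
    (x - c) ⬝ᵥ H *ᵥ (x - c) + 2 * ((y - x) ⬝ᵥ H *ᵥ (x - c)) ≤ (y - c) ⬝ᵥ H *ᵥ (y - c) := by
  have hsymm : (x - c) ⬝ᵥ H *ᵥ (y - x) = (y - x) ⬝ᵥ H *ᵥ (x - c) := by
    rw [← dotProduct_transpose_mulVec, ← conjTranspose_eq_transpose_of_trivial, hH.isHermitian.eq]
  have hnonneg := hH.dotProduct_mulVec_nonneg (y - x)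
  rw [star_trivial] at hnonneg
  rw [show y - c = (x - c) + (y - x) by abel, mulVec_add, dotProduct_add, add_dotProduct,
    add_dotProduct, hsymm]
  linarith

theorem weighted_quadForm_le_of_mulVec_eq {a b : ℝ} (ha : 0 ≤ a) (hb : 0 ≤ b)
    (hH₁ : H₁.PosSemidef) (hH₂ : H₂.PosSemidef) {c₁ c₂ x : n → ℝ}
    (hx : (a • H₁ + b • H₂) *ᵥ x = a • H₁ *ᵥ c₁ + b • H₂ *ᵥ c₂) (y : n → ℝ) :
    a * ((x - c₁) ⬝ᵥ H₁ *ᵥ (x - c₁)) + b * ((x - c₂) ⬝ᵥ H₂ *ᵥ (x - c₂)) ≤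
      a * ((y - c₁) ⬝ᵥ H₁ *ᵥ (y - c₁)) + b * ((y - c₂) ⬝ᵥ H₂ *ᵥ (y - c₂)) := by
  have hstat : a * ((y - x) ⬝ᵥ H₁ *ᵥ (x - c₁)) + b * ((y - x) ⬝ᵥ H₂ *ᵥ (x - c₂)) = 0 := by
    have : a • H₁ *ᵥ (x - c₁) + b • H₂ *ᵥ (x - c₂) = 0 := by
      rw [mulVec_sub, mulVec_sub, ← sub_eq_zero.2 hx, add_mulVec, smul_mulVec, smul_mulVec]
      module
    simpa [dotProduct_add, dotProduct_smul, smul_mulVec] using congrArg ((y - x) ⬝ᵥ ·) this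
  linear_combination mul_le_mul_of_nonneg_left (hH₁.tangent_le c₁ x y) ha +
    mul_le_mul_of_nonneg_left (hH₂.tangent_le c₂ x y) hb - 2 * hstat

end Matrix

section Scalarization

variable {α : Type*} {f g : α → ℝ} {x : ℝ → α}

theorem monotoneOn_of_minimizes_weightedSum
    (hx : ∀ t ∈ Set.Icc (0 : ℝ) 1, ∀ y, (1 - t) * f (x t) + t * g (x t) ≤ (1 - t) * f y + t * g y) :
    MonotoneOn (fun t => f (x t)) (Set.Icc 0 1) := by
  intro s hs t ht hst
  have hcomb : (t - s) * (f (x s) - f (x t)) ≤ 0 := by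
    linear_combination mul_le_mul_of_nonneg_left (hx s hs (x t)) ht.1 +
      mul_le_mul_of_nonneg_left (hx t ht (x s)) hs.1
  rcases hst.eq_or_lt with rfl | hlt
  · exact le_rfl
  · exact sub_nonpos.1 (nonpos_of_mul_nonpos_right hcomb (sub_pos.2 hlt))

theorem antitoneOn_of_minimizes_weightedSum
    (hx : ∀ t ∈ Set.Icc (0 : ℝ) 1, ∀ y, (1 - t) * f (x t) + t * g (x t) ≤ (1 - t) * f y + t * g y) :
    AntitoneOn (fun t => g (x t)) (Set.Icc 0 1) := by
  intro s hs t ht hst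
  have hcomb : (t - s) * (g (x t) - g (x s)) ≤ 0 := by
    linear_combination mul_le_mul_of_nonneg_left (hx s hs (x t)) (sub_nonneg.2 ht.2) +
      mul_le_mul_of_nonneg_left (hx t ht (x s)) (sub_nonneg.2 hs.2)
  rcases hst.eq_or_lt with rfl | hlt
  · exact le_rfl
  · exact sub_nonpos.1 (nonpos_of_mul_nonpos_right hcomb (sub_pos.2 hlt))

end Scalarization

/-- Along the curve of weighted-sum minimizers
`x_t* = ((1−t)H₁ + tH₂)⁻¹((1−t)H₁x₁* + tH₂x₂*)` of two convex-quadratic objectives,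
`t ↦ f₁(x_t*)` is monotonically nondecreasing and `t ↦ f₂(x_t*)` is monotonically
nonincreasing on `[0,1]`. -/
theorem objective_monotone_along_pareto_curve {d : ℕ}
    (H₁ H₂ : Matrix (Fin d) (Fin d) ℝ) (hH₁ : H₁.PosDef) (hH₂ : H₂.PosDef)
    (x₁ x₂ : Fin d → ℝ) (y₁ y₂ : ℝ)
    (f₁ f₂ : (Fin d → ℝ) → ℝ)
    (hf₁ : ∀ x, f₁ x = (1 / 2) * ((x - x₁) ⬝ᵥ H₁.mulVec (x - x₁)) + y₁)
    (hf₂ : ∀ x, f₂ x = (1 / 2) * ((x - x₂) ⬝ᵥ H₂.mulVec (x - x₂)) + y₂)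
    (xt : ℝ → (Fin d → ℝ))
    (hxt : ∀ t, xt t = ((1 - t) • H₁ + t • H₂)⁻¹.mulVec
      ((1 - t) • H₁.mulVec x₁ + t • H₂.mulVec x₂)) :
    MonotoneOn (fun t => f₁ (xt t)) (Set.Icc (0 : ℝ) 1) ∧
      AntitoneOn (fun t => f₂ (xt t)) (Set.Icc (0 : ℝ) 1) := by
  have hmin : ∀ t ∈ Set.Icc (0 : ℝ) 1, ∀ y,
      (1 - t) * f₁ (xt t) + t * f₂ (xt t) ≤ (1 - t) * f₁ y + t * f₂ y := by
    intro t ht y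
    have hdet : IsUnit ((1 - t) • H₁ + t • H₂).det :=
      (isUnit_iff_isUnit_det _).1 (hH₁.one_sub_smul_add_smul hH₂ ht).isUnit
    have hstat : ((1 - t) • H₁ + t • H₂) *ᵥ xt t = (1 - t) • H₁ *ᵥ x₁ + t • H₂ *ᵥ x₂ := by
      rw [hxt, mulVec_mulVec, mul_nonsing_inv _ hdet, one_mulVec]
    have := weighted_quadForm_le_of_mulVec_eq (sub_nonneg.2 ht.2) ht.1 hH₁.posSemidef
      hH₂.posSemidef hstat y
    simp only [hf₁, hf₂]
    linarith
  exact ⟨monotoneOn_of_minimizes_weightedSum hmin, antitoneOn_of_minimizes_weightedSum hmin⟩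
end

section
/- Let g₁, …, g_J and h₁, …, h_K be convex-quadratic functions on ℝ^d, where g_j has symmetric positive-definite Hessian A_j and optimum a_j, and h_k has symmetric positive-definite Hessian B_k and optimum b_k. Define f₁(x) = min_j g_j(x) and f₂(x) = min_k h_k(x). Then every Pareto-optimal point x of F = (f₁, f₂) lies in the union of the parametrized Pareto sets of the peak pairs: there exist indices j, k and t ∈ [0,1] such that x = ((1 − t) A_j + t B_k)⁻¹ ((1 − t) A_j a_j + t B_k b_k). -/
/-!
At a Pareto-optimal point `x`, pick peaks `g_j`, `h_k` active at `x` (attaining the minima).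
Their gradients `u = A_j (x - a_j)` and `v = B_k (x - b_k)` admit no common descent direction,
for moving along one would strictly decrease both `g_j` and `h_k`, hence both `f₁ ≤ g_j` and
`f₂ ≤ h_k`. By Hahn–Banach separation of `0` from the segment `[u, v]` (Gordan's alternative),
`0` then lies on that segment: `(1 - t) u + t v = 0` for some `t ∈ [0, 1]`, which says exactly
that `x` minimizes `(1 - t) g_j + t h_k`, i.e. lies on the peak-pair curve.
-/

open Matrix Filter Topology

theorem exists_strongDual_neg_neg_of_zero_notMem_segment {E : Type*} [AddCommGroup E]
    [TopologicalSpace E] [Module ℝ E] [IsTopologicalAddGroup E] [ContinuousSMul ℝ E]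
    [LocallyConvexSpace ℝ E] [T1Space E] {u v : E} (h : (0 : E) ∉ segment ℝ u v) :
    ∃ f : StrongDual ℝ E, f u < 0 ∧ f v < 0 := by
  have hcompact : IsCompact (segment ℝ u v) := by
    simpa only [convexHull_pair] using (Set.toFinite {u, v}).isCompact_convexHull ℝ
  obtain ⟨f, c, c', hf, hcc', hf0⟩ := geometric_hahn_banach_compact_closed (convex_segment u v)
    hcompact (convex_singleton 0) isClosed_singleton (Set.disjoint_singleton_right.2 h)
  have hc : c < 0 := by simpa using hcc'.trans (hf0 0 rfl)
  exact ⟨f, (hf u (left_mem_segment ℝ u v)).trans hc, (hf v (right_mem_segment ℝ u v)).trans hc⟩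

theorem Matrix.PosDef.one_sub_smul_add_smul_s14 {n : Type*} {A B : Matrix n n ℝ}
    (hA : A.PosDef) (hB : B.PosDef) {t : ℝ} (ht : t ∈ Set.Icc (0 : ℝ) 1) :
    ((1 - t) • A + t • B).PosDef := by
  rcases ht.2.lt_or_eq with ht1 | rfl
  · exact (hA.smul (sub_pos.2 ht1)).add_posSemidef (hB.posSemidef.smul ht.1)
  · simpa using hB

section QuadraticForms

variable {n : Type*} [Fintype n]

theorem zero_mem_segment_or_exists_dotProduct_neg_neg (u v : n → ℝ) :
    (0 : n → ℝ) ∈ segment ℝ u v ∨ ∃ w : n → ℝ, u ⬝ᵥ w < 0 ∧ v ⬝ᵥ w < 0 := by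
  classical
  refine or_iff_not_imp_left.2 fun h => ?_
  obtain ⟨f, hu, hv⟩ := exists_strongDual_neg_neg_of_zero_notMem_segment h
  have hf : ∀ z, f z = z ⬝ᵥ fun i => f fun j => if i = j then 1 else 0 :=
    (f : (n → ℝ) →ₗ[ℝ] ℝ).pi_apply_eq_sum_univ
  exact ⟨_, hf u ▸ hu, hf v ▸ hv⟩

theorem Matrix.IsHermitian.dotProduct_mulVec_add_smul
    {M : Matrix n n ℝ} (hM : M.IsHermitian) (y w : n → ℝ) (s : ℝ) :
    (y + s • w) ⬝ᵥ M *ᵥ (y + s • w) =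
      y ⬝ᵥ M *ᵥ y + 2 * s * (M *ᵥ y ⬝ᵥ w) + s ^ 2 * (w ⬝ᵥ M *ᵥ w) := by
  have hsymm : y ⬝ᵥ M *ᵥ w = M *ᵥ y ⬝ᵥ w := by
    rw [dotProduct_mulVec, ← mulVec_transpose, ← conjTranspose_eq_transpose_of_trivial, hM.eq,
      dotProduct_comm]
  simp only [mulVec_add, mulVec_smul, dotProduct_add, add_dotProduct, dotProduct_smul,
    smul_dotProduct, smul_eq_mul, hsymm, dotProduct_comm w (M *ᵥ y)]
  ring

theorem Matrix.IsHermitian.eventually_dotProduct_mulVec_add_smul_lt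
    {M : Matrix n n ℝ} (hM : M.IsHermitian) {y w : n → ℝ} (hw : M *ᵥ y ⬝ᵥ w < 0) :
    ∀ᶠ s in 𝓝[>] (0 : ℝ), (y + s • w) ⬝ᵥ M *ᵥ (y + s • w) < y ⬝ᵥ M *ᵥ y := by
  have hslope : ∀ᶠ s in 𝓝 (0 : ℝ), 2 * (M *ᵥ y ⬝ᵥ w) + s * (w ⬝ᵥ M *ᵥ w) < 0 := by
    refine (Continuous.tendsto (by fun_prop) 0).eventually (gt_mem_nhds ?_)
    rw [zero_mul, add_zero]
    linarith
  filter_upwards [nhdsWithin_le_nhds hslope, self_mem_nhdsWithin] with s hs (hs0 : 0 < s)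
  rw [hM.dotProduct_mulVec_add_smul]
  nlinarith [mul_neg_of_pos_of_neg hs0 hs]

theorem eq_inv_mulVec_of_one_sub_smul_add_smul_eq_zero [DecidableEq n]
    {A B : Matrix n n ℝ} (hA : A.PosDef) (hB : B.PosDef) {a b x : n → ℝ} {t : ℝ}
    (ht : t ∈ Set.Icc (0 : ℝ) 1) (hstat : (1 - t) • (A *ᵥ (x - a)) + t • (B *ᵥ (x - b)) = 0) :
    x = ((1 - t) • A + t • B)⁻¹ *ᵥ ((1 - t) • A *ᵥ a + t • B *ᵥ b) := by
  have := ((hA.one_sub_smul_add_smul_s14 hB ht).isUnit).invertible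
  refine (inv_mulVec_eq_vec ?_).symm
  rw [add_mulVec, smul_mulVec, smul_mulVec]
  simp only [mulVec_sub, smul_sub] at hstat
  linear_combination (norm := module) -hstat

theorem exists_eq_weighted_sum_minimizer_of_not_exists_common_descent [DecidableEq n]
    {A B : Matrix n n ℝ} (hA : A.PosDef) (hB : B.PosDef) {a b x : n → ℝ}
    (hx : ¬ ∃ x', (x' - a) ⬝ᵥ A *ᵥ (x' - a) < (x - a) ⬝ᵥ A *ᵥ (x - a) ∧
      (x' - b) ⬝ᵥ B *ᵥ (x' - b) < (x - b) ⬝ᵥ B *ᵥ (x - b)) :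
    ∃ t ∈ Set.Icc (0 : ℝ) 1, x = ((1 - t) • A + t • B)⁻¹ *ᵥ ((1 - t) • A *ᵥ a + t • B *ᵥ b) := by
  rcases zero_mem_segment_or_exists_dotProduct_neg_neg (A *ᵥ (x - a)) (B *ᵥ (x - b)) with
    hstat | ⟨w, hwA, hwB⟩
  · rw [segment_eq_image] at hstat
    obtain ⟨t, ht, hstat⟩ := hstat
    exact ⟨t, ht, eq_inv_mulVec_of_one_sub_smul_add_smul_eq_zero hA hB ht hstat⟩
  · obtain ⟨s, hsA, hsB⟩ := ((hA.isHermitian.eventually_dotProduct_mulVec_add_smul_lt hwA).and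
      (hB.isHermitian.eventually_dotProduct_mulVec_add_smul_lt hwB)).exists
    refine absurd ⟨x + s • w, ?_, ?_⟩ hx <;> rwa [add_sub_right_comm]

end QuadraticForms

/-- If `f₁ = min_j g_j` and `f₂ = min_k h_k` are pointwise minima of
finitely many convex-quadratic functions with symmetric positive-definite Hessians
`A_j` (resp. `B_k`) and optima `a_j` (resp. `b_k`), then every Pareto-optimal point of
`F = (f₁, f₂)` lies in the union of the parametrized Pareto sets of the peak pairs:
`x = ((1−t)A_j + tB_k)⁻¹((1−t)A_j a_j + tB_k b_k)` for some `j, k` and `t ∈ [0,1]`. -/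
theorem pareto_set_subset_union_of_peak_pair_curves {d J K : ℕ}
    (hJ : 1 ≤ J) (hK : 1 ≤ K)
    (A : Fin J → Matrix (Fin d) (Fin d) ℝ) (hA : ∀ j, (A j).PosDef)
    (B : Fin K → Matrix (Fin d) (Fin d) ℝ) (hB : ∀ k, (B k).PosDef)
    (a : Fin J → (Fin d → ℝ)) (b : Fin K → (Fin d → ℝ))
    (ya : Fin J → ℝ) (yb : Fin K → ℝ)
    (g : Fin J → (Fin d → ℝ) → ℝ) (h : Fin K → (Fin d → ℝ) → ℝ)
    (hg : ∀ j x, g j x =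
      (1 / 2) * ((x - a j) ⬝ᵥ (A j).mulVec (x - a j)) + ya j)
    (hh : ∀ k x, h k x =
      (1 / 2) * ((x - b k) ⬝ᵥ (B k).mulVec (x - b k)) + yb k)
    (f₁ f₂ : (Fin d → ℝ) → ℝ)
    (hf₁ : ∀ x, f₁ x =
      Finset.univ.inf' ⟨⟨0, hJ⟩, Finset.mem_univ _⟩ (fun j => g j x))
    (hf₂ : ∀ x, f₂ x =
      Finset.univ.inf' ⟨⟨0, hK⟩, Finset.mem_univ _⟩ (fun k => h k x))
    (x : Fin d → ℝ)
    (hx : ¬ ∃ x' : Fin d → ℝ,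
      f₁ x' ≤ f₁ x ∧ f₂ x' ≤ f₂ x ∧ (f₁ x' < f₁ x ∨ f₂ x' < f₂ x)) :
    ∃ (j : Fin J) (k : Fin K), ∃ t ∈ Set.Icc (0 : ℝ) 1,
      x = ((1 - t) • A j + t • B k)⁻¹.mulVec
        ((1 - t) • (A j).mulVec (a j) + t • (B k).mulVec (b k)) := by
  obtain ⟨j, -, hj⟩ := Finset.exists_mem_eq_inf' _ (fun j => g j x)
  obtain ⟨k, -, hk⟩ := Finset.exists_mem_eq_inf' _ (fun k => h k x)
  refine ⟨j, k, exists_eq_weighted_sum_minimizer_of_not_exists_common_descent (hA j) (hB k) ?_⟩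
  rintro ⟨x', hA', hB'⟩
  have hf₁' : f₁ x' < f₁ x := calc
    f₁ x' ≤ g j x' := hf₁ x' ▸ Finset.inf'_le _ (Finset.mem_univ j)
    _ < g j x := by rw [hg, hg]; linarith
    _ = f₁ x := (hf₁ x ▸ hj).symm
  have hf₂' : f₂ x' < f₂ x := calc
    f₂ x' ≤ h k x' := hf₂ x' ▸ Finset.inf'_le _ (Finset.mem_univ k)
    _ < h k x := by rw [hh, hh]; linarith
    _ = f₂ x := (hf₂ x ▸ hk).symm
  exact hx ⟨x', hf₁'.le, hf₂'.le, Or.inl hf₁'⟩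
end

section
/- Let f₁, f₂ be convex-quadratic functions on ℝ^d with symmetric positive-definite Hessians H₁, H₂ and distinct optima x₁* ≠ x₂*, and for t ∈ [0,1] let x_t* = ((1 − t) H₁ + t H₂)⁻¹ ((1 − t) H₁ x₁* + t H₂ x₂*). Then for any t, t' ∈ [0,1] with x_t* ≠ x_{t'}*, the points x_t* and x_{t'}* are mutually nondominated under F = (f₁, f₂): neither dominates the other. -/
/-!
Put `H_t = (1 - t) H₁ + t H₂`. Since `H_t x_t* = (1 - t) H₁ x₁* + t H₂ x₂*`, completing the square
gives `f_t y = f_t x_t* + ½ (y - x_t*)ᵀ H_t (y - x_t*)`, and `H_t` is positive definite, so `x_t*` is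
the unique minimizer of `f_t`. A point that is no worse than `x_t*` in both objectives is no worse
for `f_t` either, hence equals `x_t*`.
-/

open Matrix

namespace Matrix

variable {n α : Type*}

theorem PosDef.one_sub_smul_add_smul_s18 {A B : Matrix n n ℝ} (hA : A.PosDef) (hB : B.PosDef)
    {t : ℝ} (ht₀ : 0 ≤ t) (ht₁ : t ≤ 1) : ((1 - t) • A + t • B).PosDef := by
  rcases ht₁.lt_or_eq with ht₁ | rfl
  · exact (hA.smul (sub_pos.mpr ht₁)).add_posSemidef (hB.posSemidef.smul ht₀)
  · simpa using hB

variable [Fintype n]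

theorem IsSymm.dotProduct_mulVec_comm [CommSemiring α] {A : Matrix n n α} (hA : A.IsSymm)
    (x y : n → α) : x ⬝ᵥ A *ᵥ y = y ⬝ᵥ A *ᵥ x := by
  rw [← dotProduct_transpose_mulVec, hA.eq]

theorem IsSymm.sub_dotProduct_mulVec_sub [CommRing α] {A : Matrix n n α} (hA : A.IsSymm)
    (c y z : n → α) :
    (y - c) ⬝ᵥ A *ᵥ (y - c) =
      (z - c) ⬝ᵥ A *ᵥ (z - c) + 2 * ((y - z) ⬝ᵥ A *ᵥ (z - c)) + (y - z) ⬝ᵥ A *ᵥ (y - z) := by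
  rw [show y - c = (y - z) + (z - c) by abel, mulVec_add, dotProduct_add, add_dotProduct,
    add_dotProduct, hA.dotProduct_mulVec_comm (z - c) (y - z)]
  ring

/-- Completing the square around the critical point `z` of the weighted sum. -/
theorem IsSymm.weighted_sub_dotProduct_mulVec_sub [CommRing α] {A B : Matrix n n α}
    (hA : A.IsSymm) (hB : B.IsSymm) {a b : α} {xa xb z : n → α}
    (hz : (a • A + b • B) *ᵥ z = a • A *ᵥ xa + b • B *ᵥ xb) (y : n → α) :
    a * ((y - xa) ⬝ᵥ A *ᵥ (y - xa)) + b * ((y - xb) ⬝ᵥ B *ᵥ (y - xb)) =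
      a * ((z - xa) ⬝ᵥ A *ᵥ (z - xa)) + b * ((z - xb) ⬝ᵥ B *ᵥ (z - xb)) +
        (y - z) ⬝ᵥ (a • A + b • B) *ᵥ (y - z) := by
  have hcross : a * ((y - z) ⬝ᵥ A *ᵥ (z - xa)) + b * ((y - z) ⬝ᵥ B *ᵥ (z - xb)) = 0 := by
    calc _ = (y - z) ⬝ᵥ ((a • A + b • B) *ᵥ z - (a • A *ᵥ xa + b • B *ᵥ xb)) := by
          simp only [mulVec_sub, add_mulVec, smul_mulVec, dotProduct_sub, dotProduct_add,
            dotProduct_smul, smul_eq_mul]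
          ring
      _ = 0 := by rw [hz, sub_self, dotProduct_zero]
  have hcurv : (y - z) ⬝ᵥ (a • A + b • B) *ᵥ (y - z) =
      a * ((y - z) ⬝ᵥ A *ᵥ (y - z)) + b * ((y - z) ⬝ᵥ B *ᵥ (y - z)) := by
    simp only [add_mulVec, smul_mulVec, dotProduct_add, dotProduct_smul, smul_eq_mul]
  rw [hA.sub_dotProduct_mulVec_sub xa y z, hB.sub_dotProduct_mulVec_sub xb y z, hcurv]
  linear_combination 2 * hcross

theorem IsSymm.weighted_sub_dotProduct_mulVec_sub_lt {A B : Matrix n n ℝ}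
    (hA : A.IsSymm) (hB : B.IsSymm) {a b : ℝ} (hpos : (a • A + b • B).PosDef) {xa xb z : n → ℝ}
    (hz : (a • A + b • B) *ᵥ z = a • A *ᵥ xa + b • B *ᵥ xb) {y : n → ℝ} (hy : y ≠ z) :
    a * ((z - xa) ⬝ᵥ A *ᵥ (z - xa)) + b * ((z - xb) ⬝ᵥ B *ᵥ (z - xb)) <
      a * ((y - xa) ⬝ᵥ A *ᵥ (y - xa)) + b * ((y - xb) ⬝ᵥ B *ᵥ (y - xb)) := by
  have hgap := hpos.dotProduct_mulVec_pos (sub_ne_zero.mpr hy)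
  rw [star_trivial] at hgap
  rw [hA.weighted_sub_dotProduct_mulVec_sub hB hz y]
  linarith

end Matrix

theorem not_le_and_le_of_weighted_lt {ι : Type*} {f g : ι → ℝ} {t : ℝ} (ht₀ : 0 ≤ t)
    (ht₁ : t ≤ 1) {x y : ι} (h : (1 - t) * f x + t * g x < (1 - t) * f y + t * g y) :
    ¬ (f y ≤ f x ∧ g y ≤ g x) := by
  rintro ⟨hf, hg⟩
  linarith [mul_le_mul_of_nonneg_left hf (sub_nonneg.mpr ht₁), mul_le_mul_of_nonneg_left hg ht₀]

theorem weighted_sum_minimizers_mutually_nondominated_general {d : ℕ}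
    (H₁ H₂ : Matrix (Fin d) (Fin d) ℝ) (hH₁ : H₁.PosDef) (hH₂ : H₂.PosDef)
    (x₁ x₂ : Fin d → ℝ) (y₁ y₂ : ℝ)
    (f₁ f₂ : (Fin d → ℝ) → ℝ)
    (hf₁ : ∀ x, f₁ x = (1 / 2) * ((x - x₁) ⬝ᵥ H₁.mulVec (x - x₁)) + y₁)
    (hf₂ : ∀ x, f₂ x = (1 / 2) * ((x - x₂) ⬝ᵥ H₂.mulVec (x - x₂)) + y₂)
    (xt : ℝ → (Fin d → ℝ))
    (hxt : ∀ t, xt t = ((1 - t) • H₁ + t • H₂)⁻¹.mulVec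
      ((1 - t) • H₁.mulVec x₁ + t • H₂.mulVec x₂))
    (t t' : ℝ) (ht : t ∈ Set.Icc (0 : ℝ) 1) (ht' : t' ∈ Set.Icc (0 : ℝ) 1)
    (hne : xt t ≠ xt t') :
    ¬ (f₁ (xt t) ≤ f₁ (xt t') ∧ f₂ (xt t) ≤ f₂ (xt t') ∧
        (f₁ (xt t) < f₁ (xt t') ∨ f₂ (xt t) < f₂ (xt t'))) ∧
    ¬ (f₁ (xt t') ≤ f₁ (xt t) ∧ f₂ (xt t') ≤ f₂ (xt t) ∧
        (f₁ (xt t') < f₁ (xt t) ∨ f₂ (xt t') < f₂ (xt t))) := by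
  have hmin : ∀ s ∈ Set.Icc (0 : ℝ) 1, ∀ y ≠ xt s,
      (1 - s) * f₁ (xt s) + s * f₂ (xt s) < (1 - s) * f₁ y + s * f₂ y := by
    rintro s ⟨hs₀, hs₁⟩ y hy
    have hpos := hH₁.one_sub_smul_add_smul_s18 hH₂ hs₀ hs₁
    have hcrit : ((1 - s) • H₁ + s • H₂) *ᵥ xt s = (1 - s) • H₁ *ᵥ x₁ + s • H₂ *ᵥ x₂ := by
      rw [hxt, mulVec_mulVec, mul_nonsing_inv _ ((isUnit_iff_isUnit_det _).mp hpos.isUnit),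
        one_mulVec]
    have hlt := (isHermitian_iff_isSymm.mp hH₁.isHermitian).weighted_sub_dotProduct_mulVec_sub_lt
      (isHermitian_iff_isSymm.mp hH₂.isHermitian) hpos hcrit hy
    simp only [hf₁, hf₂]
    linarith
  exact ⟨fun h ↦ not_le_and_le_of_weighted_lt ht'.1 ht'.2 (hmin t' ht' _ hne) ⟨h.1, h.2.1⟩,
    fun h ↦ not_le_and_le_of_weighted_lt ht.1 ht.2 (hmin t ht _ hne.symm) ⟨h.1, h.2.1⟩⟩

/-- For convex-quadratic objectives with symmetric positive-definite
Hessians and distinct optima, any two distinct weighted-sum minimizers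
`x_t*, x_{t'}*` (`t, t' ∈ [0,1]`) are mutually nondominated under `F = (f₁, f₂)`. -/
theorem weighted_sum_minimizers_mutually_nondominated {d : ℕ}
    (H₁ H₂ : Matrix (Fin d) (Fin d) ℝ) (hH₁ : H₁.PosDef) (hH₂ : H₂.PosDef)
    (x₁ x₂ : Fin d → ℝ) (hx : x₁ ≠ x₂) (y₁ y₂ : ℝ)
    (f₁ f₂ : (Fin d → ℝ) → ℝ)
    (hf₁ : ∀ x, f₁ x = (1 / 2) * ((x - x₁) ⬝ᵥ H₁.mulVec (x - x₁)) + y₁)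
    (hf₂ : ∀ x, f₂ x = (1 / 2) * ((x - x₂) ⬝ᵥ H₂.mulVec (x - x₂)) + y₂)
    (xt : ℝ → (Fin d → ℝ))
    (hxt : ∀ t, xt t = ((1 - t) • H₁ + t • H₂)⁻¹.mulVec
      ((1 - t) • H₁.mulVec x₁ + t • H₂.mulVec x₂))
    (t t' : ℝ) (ht : t ∈ Set.Icc (0 : ℝ) 1) (ht' : t' ∈ Set.Icc (0 : ℝ) 1)
    (hne : xt t ≠ xt t') :
    ¬ (f₁ (xt t) ≤ f₁ (xt t') ∧ f₂ (xt t) ≤ f₂ (xt t') ∧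
        (f₁ (xt t) < f₁ (xt t') ∨ f₂ (xt t) < f₂ (xt t'))) ∧
    ¬ (f₁ (xt t') ≤ f₁ (xt t) ∧ f₂ (xt t') ≤ f₂ (xt t) ∧
        (f₁ (xt t') < f₁ (xt t) ∨ f₂ (xt t') < f₂ (xt t))) :=
  weighted_sum_minimizers_mutually_nondominated_general H₁ H₂ hH₁ hH₂ x₁ x₂ y₁ y₂ f₁ f₂ hf₁ hf₂ xt
    hxt t t' ht ht' hne
end
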